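/- Let h : ℝ² → ℝ be continuous and satisfy conditions (h1)–(h4). The rotation number function is continuous on the set of h-minimal configurations with the product topology: if (x^(k))_{k∈ℕ} are h-minimal configurations converging pointwise to an h-minimal configuration x, then ρ(x^(k)) → ρ(x) as k → ∞, where ρ denotes the rotation number (which exists for every h-minimal configuration). -/

import Mathlib

/-!
Minimizing the action among `(q, p)`-periodic configurations gives a minimal configuration for
every rational `ω = p / q`. By Aubry's crossing lemma, which follows from (h3) and (h4), it does
not cross its integer translates, hence stays within distance `1` of a line of slope `ω`. These
configurations serve as barriers: if a minimal configuration `x` with rotation number `β` had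
`x n - x 0 - n β > 2`, it would cross from below to above a barrier of rational slope slightly
larger than `β`, could never cross back, and so would have rotation number at least that slope.
Hence `|x n - x 0 - n β| ≤ 2` for all `n ≥ 1`, and for a fixed `N` the pointwise convergence at
`0` and `N` gives `N |ρ(x^(k)) - ρ(x)| ≤ 6` for large `k`.
-/

open Filter Topology MeasureTheory

/-- The finite segment of `x` between indices `j` and `k` is `h`-minimal. -/
def IsMinSegment (h : ℝ → ℝ → ℝ) (j k : ℤ) (x : ℤ → ℝ) : Prop :=
  ∀ y : ℤ → ℝ, y j = x j → y k = x k →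
    ∑ i ∈ Finset.Ico j k, h (x i) (x (i + 1)) ≤ ∑ i ∈ Finset.Ico j k, h (y i) (y (i + 1))

/-- A bi-infinite configuration is `h`-minimal if every finite segment of it is minimal. -/
def MinimalConfig (h : ℝ → ℝ → ℝ) (x : ℤ → ℝ) : Prop :=
  ∀ j k : ℤ, j < k → IsMinSegment h j k x

/-- The segment `(a, b, c)` is `h`-minimal (endpoints `a`, `c` fixed, middle point varies). -/
def MinTriple (h : ℝ → ℝ → ℝ) (a b c : ℝ) : Prop :=
  ∀ m : ℝ, h a b + h b c ≤ h a m + h m c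

/-- Condition (h1): periodicity. -/
def CondH1 (h : ℝ → ℝ → ℝ) : Prop := ∀ x x' : ℝ, h (x + 1) (x' + 1) = h x x'

/-- Condition (h2): `h (x, x+ξ) → +∞` as `|ξ| → ∞`, uniformly in `x`. -/
def CondH2 (h : ℝ → ℝ → ℝ) : Prop :=
  ∀ M : ℝ, ∃ R : ℝ, ∀ x ξ : ℝ, R ≤ |ξ| → M ≤ h x (x + ξ)

/-- Condition (h3). -/
def CondH3 (h : ℝ → ℝ → ℝ) : Prop :=
  ∀ x ξ x' ξ' : ℝ, x < ξ → x' < ξ' → h x x' + h ξ ξ' < h x ξ' + h ξ x'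

/-- Condition (h4). -/
def CondH4 (h : ℝ → ℝ → ℝ) : Prop :=
  ∀ xb x x' ξb ξ' : ℝ, MinTriple h xb x x' → MinTriple h ξb x ξ' →
    (xb ≠ ξb ∨ x' ≠ ξ') → (xb - ξb) * (x' - ξ') < 0

/-- Condition (h5). -/
def CondH5 (h : ℝ → ℝ → ℝ) : Prop :=
  ∃ ρ : ℝ → ℝ → ℝ, Continuous (Function.uncurry ρ) ∧ (∀ s s' : ℝ, 0 < ρ s s') ∧
    ∀ x ξ x' ξ' : ℝ, x < ξ → x' < ξ' →
      (∫ s in x..ξ, ∫ s' in x'..ξ', ρ s s') ≤ h x ξ' + h ξ x' - h x x' - h ξ ξ'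

/-- Condition (h6θ). -/
def CondH6 (θ : ℝ) (h : ℝ → ℝ → ℝ) : Prop :=
  (∀ x' : ℝ, ConvexOn ℝ Set.univ fun x => θ * (x - x') ^ 2 / 2 - h x x') ∧
  (∀ x : ℝ, ConvexOn ℝ Set.univ fun x' => θ * (x' - x) ^ 2 / 2 - h x x')

section

variable {h : ℝ → ℝ → ℝ}

lemma CondH1.apply_add_int (h1 : CondH1 h) (a b : ℝ) (m : ℤ) : h (a + m) (b + m) = h a b := by
  have hper : Function.Periodic (fun t => h (a + t) (b + t)) 1 := fun t => by
    simpa only [add_assoc] using h1 (a + t) (b + t)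
  simpa using hper.int_mul_eq m

lemma CondH1.apply_fract (h1 : CondH1 h) (a b : ℝ) : h a b = h (Int.fract a) (b - ⌊a⌋) := by
  rw [← h1.apply_add_int (Int.fract a) (b - ⌊a⌋) ⌊a⌋, Int.fract_add_floor, sub_add_cancel]

lemma CondH2.exists_forall_le (hcont : Continuous (Function.uncurry h)) (h1 : CondH1 h)
    (h2 : CondH2 h) : ∃ c, ∀ a b, c ≤ h a b := by
  obtain ⟨R, hR⟩ := h2 0
  obtain ⟨c, hc⟩ := (isCompact_Icc.prod (isCompact_Icc (a := -R) (b := 1 + R))).bddBelow_image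
    (f := Function.uncurry h) (K := Set.Icc 0 1 ×ˢ _) hcont.continuousOn
  refine ⟨min c 0, fun a b => ?_⟩
  rcases le_or_gt R |b - a| with hfar | hnear
  · simpa using (min_le_right c 0).trans (hR a (b - a) hfar)
  · rw [h1.apply_fract]
    refine (min_le_left c 0).trans (hc ⟨(Int.fract a, b - ⌊a⌋), ⟨?_, ?_⟩, rfl⟩)
    · exact ⟨Int.fract_nonneg a, (Int.fract_lt_one a).le⟩
    · have := Int.floor_le a
      have := Int.lt_floor_add_one a
      constructor <;> linarith [abs_lt.mp hnear]

-- `IsMinSegment h j k x` unfolds to `action h x j k ≤ action h y j k`.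
noncomputable def action (h : ℝ → ℝ → ℝ) (x : ℤ → ℝ) (a b : ℤ) : ℝ :=
  ∑ i ∈ Finset.Ico a b, h (x i) (x (i + 1))

def translateConfig (x : ℤ → ℝ) (j m : ℤ) : ℤ → ℝ := fun i => x (i + j) + m

section Action

variable {x y : ℤ → ℝ} {a b c : ℤ}

lemma action_add_action (hab : a ≤ b) (hbc : b ≤ c) :
    action h x a b + action h x b c = action h x a c := by
  rw [action, action, action, ← Finset.sum_union (Finset.Ico_disjoint_Ico_consecutive a b c),
    Finset.Ico_union_Ico_eq_Ico hab hbc]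

lemma action_congr (hxy : ∀ i ∈ Set.Icc a b, x i = y i) : action h x a b = action h y a b :=
  Finset.sum_congr rfl fun i hi => by
    rw [Finset.mem_Ico] at hi
    rw [hxy i ⟨hi.1, hi.2.le⟩, hxy (i + 1) ⟨by omega, by omega⟩]

lemma mul_le_action {C : ℝ} (hC : ∀ s t, C ≤ h s t) (hab : a ≤ b) :
    (b - a) * C ≤ action h x a b := by
  have hcard : ((b - a).toNat : ℝ) = b - a := by exact_mod_cast Int.toNat_of_nonneg (by omega)
  have := Finset.card_nsmul_le_sum (Finset.Ico a b) (fun i => h (x i) (x (i + 1))) C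
    fun _ _ => hC _ _
  rwa [Int.card_Ico, nsmul_eq_mul, hcard] at this

lemma continuous_action (hcont : Continuous (Function.uncurry h)) (a b : ℤ) :
    Continuous fun x : ℤ → ℝ => action h x a b :=
  continuous_finsetSum _ fun i _ =>
    hcont.comp (by fun_prop : Continuous fun x : ℤ → ℝ => (x i, x (i + 1)))

lemma action_translateConfig (h1 : CondH1 h) (x : ℤ → ℝ) (j m a b : ℤ) :
    action h (translateConfig x j m) a b = action h x (a + j) (b + j) := by
  rw [action, action, ← Finset.sum_Ico_add']
  refine Finset.sum_congr rfl fun i _ => ?_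
  rw [translateConfig, translateConfig, add_right_comm i 1 j, h1.apply_add_int]

lemma action_eq_add_action (hab : a < b) :
    action h x a b = h (x a) (x (a + 1)) + action h x (a + 1) b := by
  rw [action, action, ← Finset.insert_Ico_add_one_left_eq_Ico hab,
    Finset.sum_insert (by simp)]

end Action

lemma MinimalConfig.translate (h1 : CondH1 h) {x : ℤ → ℝ} (hx : MinimalConfig h x)
    (j m : ℤ) : MinimalConfig h (translateConfig x j m) := by
  intro a b hab y hya hyb
  have hy : y = translateConfig (translateConfig y (-j) (-m)) j m := by
    ext i; simp [translateConfig]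
  change action h _ a b ≤ action h y a b
  rw [hy, action_translateConfig h1, action_translateConfig h1]
  refine hx (a + j) (b + j) (by omega) _ ?_ ?_ <;> simp [translateConfig, hya, hyb]

lemma IsMinSegment.minTriple {x : ℤ → ℝ} {r t c : ℤ} (hx : IsMinSegment h r t x)
    (hrc : r < c) (hct : c < t) : MinTriple h (x (c - 1)) (x c) (x (c + 1)) := by
  intro m
  have hsplit : ∀ z : ℤ → ℝ, action h z r t = action h z r (c - 1)
      + (h (z (c - 1)) (z c) + h (z c) (z (c + 1))) + action h z (c + 1) t := fun z => by
    rw [← action_add_action (by omega) (show c - 1 ≤ t by omega),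
      action_eq_add_action (show c - 1 < t by omega), sub_add_cancel, action_eq_add_action hct]
    ring
  have hle : action h x r t ≤ action h (Function.update x c m) r t :=
    hx _ (Function.update_of_ne (by omega) m x) (Function.update_of_ne (by omega) m x)
  have hleft : action h (Function.update x c m) r (c - 1) = action h x r (c - 1) :=
    action_congr fun i hi => Function.update_of_ne (by grind) m x
  have hright : action h (Function.update x c m) (c + 1) t = action h x (c + 1) t :=
    action_congr fun i hi => Function.update_of_ne (by grind) m x
  rw [hsplit, hsplit (Function.update x c m), hleft, hright, Function.update_self,
    Function.update_of_ne (by omega), Function.update_of_ne (by omega)] at hle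
  linarith

lemma Int.exists_mem_Ico_and_not_add_one {p : ℤ → Prop} {r s : ℤ} (hrs : r < s) (hr : p r)
    (hs : ¬ p s) : ∃ c ∈ Finset.Ico r s, p c ∧ ¬ p (c + 1) := by
  induction s, hrs using Int.leInduction with
  | base => exact ⟨r, by simp, hr, hs⟩
  | succ s hrs ih =>
    by_cases hps : p s
    · exact ⟨s, by simp; omega, hps, hs⟩
    · obtain ⟨c, hc, hpc, hpc'⟩ := ih hps
      exact ⟨c, by simp at hc ⊢; omega, hpc, hpc'⟩

lemma CondH3.exchange_lt (h3 : CondH3 h) {a b a' b' : ℝ} (hab : a < b) (hba : b' < a') :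
    h (min a b) (min a' b') + h (max a b) (max a' b') < h a a' + h b b' := by
  rw [min_eq_left hab.le, min_eq_right hba.le, max_eq_right hab.le, max_eq_left hba.le]
  linarith [h3 a b b' a' hab hba]

lemma CondH3.exchange_le (h3 : CondH3 h) (a b a' b' : ℝ) :
    h (min a b) (min a' b') + h (max a b) (max a' b') ≤ h a a' + h b b' := by
  wlog hab : a ≤ b generalizing a b a' b'
  · have := this b a b' a' (le_of_not_ge hab)
    rw [min_comm, max_comm, min_comm b', max_comm b'] at this
    linarith
  rcases le_or_gt a' b' with hab' | hba'
  · simp [hab, hab']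
  · rcases hab.eq_or_lt with rfl | hab
    · simp [hba'.le, add_comm]
    · exact (h3.exchange_lt hab hba').le

section Crossing

variable {x z : ℤ → ℝ} {r t : ℤ}

lemma CondH3.action_inf_add_action_sup_le (h3 : CondH3 h) (a b : ℤ) :
    action h (x ⊓ z) a b + action h (x ⊔ z) a b ≤ action h x a b + action h z a b := by
  simp only [action, ← Finset.sum_add_distrib]
  exact Finset.sum_le_sum fun i _ => h3.exchange_le _ _ _ _

lemma IsMinSegment.action_inf_eq_and_action_sup_eq (h3 : CondH3 h) (hx : IsMinSegment h r t x)
    (hz : IsMinSegment h r t z) (hr : x r ≤ z r) (ht : x t ≤ z t) :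
    action h (x ⊓ z) r t = action h x r t ∧ action h (x ⊔ z) r t = action h z r t := by
  have hinf : action h x r t ≤ action h (x ⊓ z) r t :=
    hx _ (inf_eq_left.mpr hr) (inf_eq_left.mpr ht)
  have hsup : action h z r t ≤ action h (x ⊔ z) r t :=
    hz _ (sup_eq_right.mpr hr) (sup_eq_right.mpr ht)
  have := h3.action_inf_add_action_sup_le (x := x) (z := z) r t
  constructor <;> linarith

lemma IsMinSegment.inf_and_sup (h3 : CondH3 h) (hx : IsMinSegment h r t x)
    (hz : IsMinSegment h r t z) (hr : x r ≤ z r) (ht : x t ≤ z t) :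
    IsMinSegment h r t (x ⊓ z) ∧ IsMinSegment h r t (x ⊔ z) := by
  obtain ⟨hinf, hsup⟩ := hx.action_inf_eq_and_action_sup_eq h3 hz hr ht
  refine ⟨fun y hyr hyt => ?_, fun y hyr hyt => ?_⟩
  · exact hinf.trans_le (hx y (hyr.trans (inf_eq_left.mpr hr)) (hyt.trans (inf_eq_left.mpr ht)))
  · exact hsup.trans_le (hz y (hyr.trans (sup_eq_right.mpr hr)) (hyt.trans (sup_eq_right.mpr ht)))

lemma IsMinSegment.exchange_eq (h3 : CondH3 h) (hx : IsMinSegment h r t x)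
    (hz : IsMinSegment h r t z) (hr : x r ≤ z r) (ht : x t ≤ z t) :
    ∀ i ∈ Finset.Ico r t, h ((x ⊓ z) i) ((x ⊓ z) (i + 1)) + h ((x ⊔ z) i) ((x ⊔ z) (i + 1))
      = h (x i) (x (i + 1)) + h (z i) (z (i + 1)) := by
  obtain ⟨hinf, hsup⟩ := hx.action_inf_eq_and_action_sup_eq h3 hz hr ht
  refine (Finset.sum_eq_sum_iff_of_le fun i _ => h3.exchange_le _ _ _ _).mp ?_
  simp only [Finset.sum_add_distrib]
  exact congrArg₂ (· + ·) hinf hsup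

/-- Aubry's crossing lemma. -/
theorem IsMinSegment.le_of_crossing (h3 : CondH3 h) (h4 : CondH4 h) (hx : IsMinSegment h r t x)
    (hz : IsMinSegment h r t z) {s : ℤ} (hrs : r < s) (hst : s < t) (hr : x r < z r)
    (hs : z s < x s) : z t ≤ x t := by
  by_contra! ht
  obtain ⟨c, hc, hxc, hzc⟩ :=
    Int.exists_mem_Ico_and_not_add_one (p := fun i => x i ≤ z i) hrs hr.le hs.not_ge
  rw [Finset.mem_Ico] at hc
  replace hzc := not_le.mp hzc
  have hexch := hx.exchange_eq h3 hz hr.le ht.le c (Finset.mem_Ico.mpr ⟨hc.1, by omega⟩)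
  rcases hxc.lt_or_eq with hlt | htouch
  · exact (h3.exchange_lt hlt hzc).ne hexch
  · -- `x ⊓ z` and `x ⊔ z` meet at `c` and separate at `c + 1`, which (h4) forbids
    have hrc : r < c := hc.1.lt_of_ne fun hrc => hr.ne (hrc ▸ htouch)
    obtain ⟨hinf, hsup⟩ := hx.inf_and_sup h3 hz hr.le ht.le
    have hmid : (x ⊔ z) c = (x ⊓ z) c := by simp [htouch]
    have hprod := h4 _ _ _ _ _ (hmid ▸ hsup.minTriple hrc (by omega))
      (hinf.minTriple hrc (by omega)) (Or.inr (by simp [hzc.le, hzc.ne']))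
    exact hprod.not_ge (mul_nonneg (sub_nonneg.mpr inf_le_sup) (sub_nonneg.mpr inf_le_sup))

end Crossing

def IsPeriodicConfig (q p : ℤ) (z : ℤ → ℝ) : Prop := ∀ i, z (i + q) = z i + p

namespace IsPeriodicConfig

variable {q p : ℤ} {z w : ℤ → ℝ}

lemma apply_add_mul (hz : IsPeriodicConfig q p z) (i k : ℤ) : z (i + k * q) = z i + k * p := by
  induction k using Int.induction_on with
  | zero => simp
  | succ k ih => rw [add_one_mul, ← add_assoc, hz, ih]; push_cast; ring
  | pred k ih =>
    have := hz (i + (-k - 1) * q)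
    rw [show i + (-k - 1) * q + q = i + -k * q by ring, ih] at this
    push_cast at this ⊢
    linarith

lemma mul (hz : IsPeriodicConfig q p z) (k : ℤ) : IsPeriodicConfig (k * q) (k * p) z :=
  fun i => by rw [hz.apply_add_mul]; push_cast; rfl

lemma sub (hz : IsPeriodicConfig q p z) (hw : IsPeriodicConfig q p w) :
    IsPeriodicConfig q 0 (z - w) :=
  fun i => by simp [hz i, hw i]

lemma inf (hz : IsPeriodicConfig q p z) (hw : IsPeriodicConfig q p w) :
    IsPeriodicConfig q p (z ⊓ w) :=
  fun i => by simp [hz i, hw i, min_add_add_right]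

lemma sup (hz : IsPeriodicConfig q p z) (hw : IsPeriodicConfig q p w) :
    IsPeriodicConfig q p (z ⊔ w) :=
  fun i => by simp [hz i, hw i, max_add_add_right]

lemma translateConfig (hz : IsPeriodicConfig q p z) (j m : ℤ) :
    IsPeriodicConfig q p (translateConfig z j m) :=
  fun i => by simp only [_root_.translateConfig, add_right_comm i q j, hz (i + j)]; ring

variable (h1 : CondH1 h) (hz : IsPeriodicConfig q p z)
include h1 hz

lemma action_add_period (a b : ℤ) : action h z (a + q) (b + q) = action h z a b := by
  rw [action, action, ← Finset.sum_Ico_add']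
  refine Finset.sum_congr rfl fun i _ => ?_
  rw [add_right_comm, hz, hz, h1.apply_add_int]

lemma action_period_eq_of_le (hq : 0 ≤ q) {a b : ℤ} (hab : a ≤ b) :
    action h z a (a + q) = action h z b (b + q) := by
  have := action_add_action (h := h) (x := z) (show a ≤ a + q by omega)
    (show a + q ≤ b + q by omega)
  have := action_add_action (h := h) (x := z) hab (show b ≤ b + q by omega)
  have := hz.action_add_period h1 a b
  linarith

lemma action_period_eq (hq : 0 ≤ q) (a b : ℤ) :
    action h z a (a + q) = action h z b (b + q) :=
  (le_total a b).elim (hz.action_period_eq_of_le h1 hq) fun hba =>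
    (hz.action_period_eq_of_le h1 hq hba).symm

lemma action_mul (hq : 0 ≤ q) (m : ℕ) : action h z 0 (m * q) = m * action h z 0 q := by
  induction m with
  | zero => simp [action]
  | succ m ih =>
    rw [Nat.cast_succ, add_one_mul, ← action_add_action (b := m * q) (by positivity) (by omega), ih,
      hz.action_period_eq h1 hq _ 0, zero_add]
    push_cast; ring

end IsPeriodicConfig

lemma abs_sub_le_mul_of_abs_sub_le {f : ℤ → ℝ} {R : ℝ} (hf : ∀ i, |f (i + 1) - f i| ≤ R)
    (n : ℤ) : |f n - f 0| ≤ |(n : ℝ)| * R := by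
  induction n using Int.induction_on with
  | zero => simp
  | succ n ih =>
    calc |f (n + 1) - f 0| ≤ |f (n + 1) - f n| + |f n - f 0| := abs_sub_le _ _ _
      _ ≤ R + n * R := by simpa using add_le_add (hf n) ih
      _ = |((n + 1 : ℤ) : ℝ)| * R := by push_cast; rw [abs_of_nonneg (by positivity)]; ring
  | pred n ih =>
    have hstep := hf (-n - 1)
    rw [sub_add_cancel, abs_sub_comm] at hstep
    calc |f (-n - 1) - f 0| ≤ |f (-n - 1) - f (-n)| + |f (-n) - f 0| := abs_sub_le _ _ _
      _ ≤ R + n * R := by simpa using add_le_add hstep ih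
      _ = |((-n - 1 : ℤ) : ℝ)| * R := by
        push_cast; rw [abs_of_nonpos (by linarith [n.cast_nonneg (α := ℝ)])]; ring

lemma IsPeriodicConfig.isCompact_setOf (q p : ℤ) (R : ℝ) :
    IsCompact {w : ℤ → ℝ | IsPeriodicConfig q p w ∧ w 0 ∈ Set.Icc 0 1 ∧
      ∀ i, |w (i + 1) - w i| ≤ R} := by
  refine (isCompact_univ_pi fun i : ℤ => isCompact_Icc (a := -(|(i : ℝ)| * R))
    (b := 1 + |(i : ℝ)| * R)).of_isClosed_subset ?_ fun w ⟨_, hw0, hsteps⟩ i _ => ?_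
  · simp only [IsPeriodicConfig, Set.ofPred_and, Set.ofPred_forall]
    refine .inter (isClosed_iInter fun i => isClosed_eq ?_ ?_) (.inter
      (isClosed_Icc.preimage (continuous_apply 0)) (isClosed_iInter fun i => isClosed_le ?_ ?_))
      <;> fun_prop
  · have := abs_le.mp (abs_sub_le_mul_of_abs_sub_le hsteps i)
    exact ⟨by linarith [hw0.1], by linarith [hw0.2]⟩

lemma IsPeriodicConfig.add_mul_le_action {q p : ℤ} {z : ℤ → ℝ} (h1 : CondH1 h) {C : ℝ}
    (hC : ∀ s t, C ≤ h s t) (hq : 0 < q) (hz : IsPeriodicConfig q p z) (i : ℤ) :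
    h (z i) (z (i + 1)) + (q - 1) * C ≤ action h z 0 q := by
  have hrest := mul_le_action (x := z) hC (show i + 1 ≤ i + q by omega)
  have hwindow := hz.action_period_eq h1 hq.le 0 i
  rw [zero_add] at hwindow
  rw [hwindow, action_eq_add_action (by omega)]
  push_cast at hrest
  linarith

def IsPeriodicMinimizer (h : ℝ → ℝ → ℝ) (q p : ℤ) (z : ℤ → ℝ) : Prop :=
  IsPeriodicConfig q p z ∧ ∀ w, IsPeriodicConfig q p w → action h z 0 q ≤ action h w 0 q

/-- Every periodic configuration has an integer translate with `w 0 ∈ [0, 1]`. If its steps are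
bounded, it lies in a compact set; otherwise, by (h2), its action exceeds that of the line
`i ↦ p / q * i`. -/
theorem exists_isPeriodicMinimizer (hcont : Continuous (Function.uncurry h)) (h1 : CondH1 h)
    (h2 : CondH2 h) {q : ℤ} (hq : 0 < q) (p : ℤ) : ∃ z, IsPeriodicMinimizer h q p z := by
  obtain ⟨C, hC⟩ := h2.exists_forall_le hcont h1
  set ω : ℝ := p / q
  have hline : IsPeriodicConfig q p (fun i => ω * i) := fun i => by
    push_cast
    rw [mul_add, div_mul_cancel₀ _ (by positivity)]
  obtain ⟨R, hR⟩ := h2 (action h (fun i => ω * i) 0 q - (q - 1) * C + 1)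
  set K := {w : ℤ → ℝ | IsPeriodicConfig q p w ∧ w 0 ∈ Set.Icc 0 1 ∧
    ∀ i, |w (i + 1) - w i| ≤ max R |ω|}
  have hlineK : (fun i : ℤ => ω * i) ∈ K := ⟨hline, by simp, fun i => by simp [mul_add]⟩
  obtain ⟨z, hzK, hzmin⟩ := (IsPeriodicConfig.isCompact_setOf q p _).exists_isMinOn
    ⟨_, hlineK⟩ (continuous_action hcont 0 q).continuousOn
  refine ⟨z, hzK.1, fun w hw => ?_⟩
  set w' := translateConfig w 0 (-⌊w 0⌋)
  have hw' : IsPeriodicConfig q p w' := hw.translateConfig 0 _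
  have haction : action h w' 0 q = action h w 0 q := by simp [w', action_translateConfig h1]
  rw [← haction]
  by_cases hsteps : ∀ i, |w' (i + 1) - w' i| ≤ max R |ω|
  · have hw'0 : w' 0 = Int.fract (w 0) := by
      simp [w', translateConfig, ← Int.self_sub_floor, sub_eq_add_neg]
    exact hzmin ⟨hw', hw'0 ▸ ⟨Int.fract_nonneg _, (Int.fract_lt_one _).le⟩, hsteps⟩
  · obtain ⟨i, hi⟩ := not_forall.mp hsteps
    have hbig := hR (w' i) (w' (i + 1) - w' i) ((le_max_left _ _).trans (not_le.mp hi).le)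
    rw [add_sub_cancel] at hbig
    have := hw'.add_mul_le_action h1 hC hq i
    have hzline : action h z 0 q ≤ action h (fun i => ω * i) 0 q := hzmin hlineK
    linarith

lemma Finset.inf'_range_comp_add_one_of_eq {α : Type*} [SemilatticeInf α] {m : ℕ}
    (hm : (Finset.range m).Nonempty) {f : ℕ → α} (hf : f m = f 0) :
    (Finset.range m).inf' hm (fun l => f (l + 1)) = (Finset.range m).inf' hm f := by
  have hm0 : 0 < m := Finset.nonempty_range_iff.mp hm |>.bot_lt
  apply le_antisymm <;> refine Finset.le_inf' _ _ fun l hl => ?_ <;> rw [Finset.mem_range] at hl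
  · rcases l with _ | l
    · exact (Finset.inf'_le _ (Finset.mem_range.mpr (Nat.sub_lt hm0 one_pos))).trans_eq
        (by rw [Nat.sub_add_cancel (by omega : 1 ≤ m), hf])
    · exact Finset.inf'_le _ (Finset.mem_range.mpr (by omega))
  · rcases (show l + 1 ≤ m by omega).lt_or_eq with hlt | heq
    · exact Finset.inf'_le _ (Finset.mem_range.mpr hlt)
    · exact (Finset.inf'_le _ (Finset.mem_range.mpr hm0)).trans_eq (by rw [heq, hf])

namespace IsPeriodicMinimizer

variable {q p : ℤ} {u v z : ℤ → ℝ}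

lemma translateConfig (h1 : CondH1 h) (hq : 0 ≤ q) (hu : IsPeriodicMinimizer h q p u)
    (j m : ℤ) : IsPeriodicMinimizer h q p (translateConfig u j m) := by
  refine ⟨hu.1.translateConfig j m, fun w hw => ?_⟩
  rw [action_translateConfig h1, zero_add, add_comm, hu.1.action_period_eq h1 hq j 0, zero_add]
  exact hu.2 w hw

lemma inf (h3 : CondH3 h) (hu : IsPeriodicMinimizer h q p u) (hv : IsPeriodicMinimizer h q p v) :
    IsPeriodicMinimizer h q p (u ⊓ v) := by
  refine ⟨hu.1.inf hv.1, fun w hw => ?_⟩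
  have := h3.action_inf_add_action_sup_le (x := u) (z := v) 0 q
  have := hv.2 _ (hu.1.sup hv.1)
  have := hu.2 _ hv.1
  have := hu.2 w hw
  linarith

/-- The infimum of the `m` translates of an `(m q, m p)`-minimizer by multiples of `(q, p)`
is again an `(m q, m p)`-minimizer, and it is `(q, p)`-periodic. -/
theorem mul (hcont : Continuous (Function.uncurry h)) (h1 : CondH1 h) (h2 : CondH2 h)
    (h3 : CondH3 h) (hq : 0 < q) (hz : IsPeriodicMinimizer h q p z) {m : ℕ} (hm : 0 < m) :
    IsPeriodicMinimizer h (m * q) (m * p) z := by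
  obtain ⟨u, hu⟩ := exists_isPeriodicMinimizer hcont h1 h2 (q := m * q) (by positivity) (m * p)
  set T : ℕ → ℤ → ℝ := fun l => _root_.translateConfig u (l * q) (-(l * p))
  have hne : (Finset.range m).Nonempty := Finset.nonempty_range_iff.mpr hm.ne'
  set G := (Finset.range m).inf' hne T
  have hG : IsPeriodicMinimizer h (m * q) (m * p) G :=
    Finset.inf'_induction hne T (fun _ h₁ _ h₂ => h₁.inf h3 h₂)
      fun l _ => hu.translateConfig h1 (by positivity) _ _
  have hGper : IsPeriodicConfig q p G := fun i => by
    have hstep : ∀ l : ℕ, T l (i + q) = T (l + 1) i + p := fun l => by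
      simp only [T, _root_.translateConfig]; push_cast; ring_nf
    have hcycle : T m i = T 0 i := by
      simp only [T, _root_.translateConfig, hu.1 i]; push_cast; simp
    simp only [G, Finset.inf'_apply, hstep]
    rw [← Finset.inf'_range_comp_add_one_of_eq hne (f := fun l => T l i) hcycle]
    exact (map_finset_inf' (OrderIso.addRight (p : ℝ)) hne _).symm
  refine ⟨hz.1.mul m, fun w hw => ?_⟩
  calc action h z 0 (m * q) = m * action h z 0 q := hz.1.action_mul h1 hq.le m
    _ ≤ m * action h G 0 q := by gcongr; exact hz.2 G hGper
    _ = action h G 0 (m * q) := (hGper.action_mul h1 hq.le m).symm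
    _ ≤ action h w 0 (m * q) := hG.2 w hw

end IsPeriodicMinimizer

/-- A segment `y` of `z` over `[j, k]` is compared with the `(m q, m p)`-periodic configuration
that agrees with `y` on `[j, k]` and with `z` on `[k, j + m q]`. -/
theorem IsPeriodicMinimizer.minimalConfig {q p : ℤ} {z : ℤ → ℝ}
    (hcont : Continuous (Function.uncurry h)) (h1 : CondH1 h) (h2 : CondH2 h) (h3 : CondH3 h)
    (hq : 0 < q) (hz : IsPeriodicMinimizer h q p z) : MinimalConfig h z := by
  intro j k hjk y hyj hyk
  obtain ⟨m, hm, hkQ⟩ : ∃ m : ℕ, 0 < m ∧ k < j + m * q :=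
    ⟨(k - j).toNat + 1, by omega, by push_cast; nlinarith [Int.self_le_toNat (k - j)]⟩
  set Q : ℤ := m * q
  have hQ : 0 < Q := by positivity
  have hzQ : IsPeriodicMinimizer h Q (m * p) z := hz.mul hcont h1 h2 h3 hq hm
  set e : ℤ → ℝ := fun i => if i ≤ k then y i - z i else 0
  set w : ℤ → ℝ := fun i => z i + e (j + (i - j) % Q)
  have hw : IsPeriodicConfig Q (m * p) w := fun i => by
    simp only [w, hzQ.1 i, add_sub_right_comm i Q j, Int.add_emod_right]
    ring
  have hwrap : ∀ i, j ≤ i → i < j + Q → j + (i - j) % Q = i := fun i hji hiQ => by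
    rw [Int.emod_eq_of_lt (by omega) (by omega), add_sub_cancel]
  have hwy : ∀ i ∈ Set.Icc j k, w i = y i := fun i ⟨hji, hik⟩ => by
    simp only [w, e, hwrap i hji (by omega), if_pos hik, add_sub_cancel]
  have hwz : ∀ i ∈ Set.Icc k (j + Q), w i = z i := fun i ⟨hki, hiQ⟩ => by
    rcases hiQ.lt_or_eq with hiQ | rfl
    · rcases hki.lt_or_eq with hki | rfl
      · simp [w, e, hwrap i (by omega) hiQ, not_le.mpr hki]
      · simp [w, e, hwrap k hjk.le hiQ, hyk]
    · simp [w, e, hjk.le, hyj]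
  have hle := hzQ.2 w hw
  rw [← zero_add Q, ← hzQ.1.action_period_eq h1 hQ.le j, ← hw.action_period_eq h1 hQ.le j,
    ← action_add_action hjk.le hkQ.le, ← action_add_action hjk.le hkQ.le,
    action_congr hwy, action_congr hwz] at hle
  change action h z j k ≤ action h y j k
  linarith

/-- A crossing would be repeated one period later, contradicting Aubry's crossing lemma. -/
theorem MinimalConfig.forall_le_or_forall_le_translateConfig {q p : ℤ} {z : ℤ → ℝ}
    (h1 : CondH1 h) (h3 : CondH3 h) (h4 : CondH4 h) (hq : 0 < q) (hz : MinimalConfig h z)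
    (hper : IsPeriodicConfig q p z) (j c : ℤ) :
    (∀ i, z i ≤ translateConfig z j c i) ∨ (∀ i, translateConfig z j c i ≤ z i) := by
  have key : ∀ {a b : ℤ → ℝ}, MinimalConfig h a → MinimalConfig h b →
      IsPeriodicConfig q 0 (a - b) → ∀ r s, r < s → a r < b r → b s < a s → False := by
    intro a b ha hb hab r s hrs hr hs
    have hst : s < r + (s - r + 1) * q := by nlinarith
    have hcross := (ha r _ (hrs.trans hst)).le_of_crossing h3 h4 (hb r _ (hrs.trans hst)) hrs
      hst hr hs
    have hrepeat := hab.apply_add_mul r (s - r + 1)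
    simp only [Pi.sub_apply, Int.cast_zero, mul_zero, add_zero] at hrepeat
    linarith
  have hw := hz.translate h1 j c
  have hwper := hper.translateConfig j c
  by_contra! hcross
  obtain ⟨⟨t₁, ht₁⟩, ⟨t₀, ht₀⟩⟩ := hcross
  rcases lt_trichotomy t₁ t₀ with hlt | rfl | hgt
  · exact key hw hz (hwper.sub hper) t₁ t₀ hlt ht₁ ht₀
  · exact ht₁.not_gt ht₀
  · exact key hz hw (hper.sub hwper) t₀ t₁ hgt ht₀ ht₁

lemma abs_sub_le_one_of_forall_int_le_or_le {ι : Type*} {f : ι → ℝ}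
    (hf : ∀ n : ℤ, (∀ i, n ≤ f i) ∨ (∀ i, f i ≤ n)) (i j : ι) : |f i - f j| ≤ 1 := by
  suffices h : ∀ i j, f i - f j ≤ 1 from abs_sub_le_iff.mpr ⟨h i j, h j i⟩
  intro i j
  by_contra! hij
  rcases hf (⌊f j⌋ + 1) with hge | hle
  · exact (Int.lt_floor_add_one (f j)).not_ge (by exact_mod_cast hge j)
  · have := hle i
    push_cast at this
    linarith [Int.floor_le (f j)]

lemma abs_sub_mul_le_of_abs_sub_sub_le {a : ℤ → ℝ} {C : ℝ} (ha0 : a 0 = 0)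
    (ha : ∀ i j, |a (i + j) - a i - a j| ≤ C) (k : ℕ) (n : ℤ) :
    |a (k * n) - k * a n| ≤ k * C := by
  induction k with
  | zero => simp [ha0]
  | succ k ih =>
    calc |a ((k + 1 : ℕ) * n) - (k + 1 : ℕ) * a n|
        = |(a (k * n + n) - a (k * n) - a n) + (a (k * n) - k * a n)| := by
          push_cast; ring_nf
      _ ≤ C + k * C := (abs_add_le _ _).trans (add_le_add (ha _ _) ih)
      _ = (k + 1 : ℕ) * C := by push_cast; ring

/-- Not crossing its translates makes `i ↦ z i - z 0` additive up to `1`, and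
`z (q i) = z 0 + p i`. -/
theorem MinimalConfig.abs_sub_sub_mul_le_one {q p : ℤ} {z : ℤ → ℝ} (h1 : CondH1 h)
    (h3 : CondH3 h) (h4 : CondH4 h) (hq : 0 < q) (hz : MinimalConfig h z)
    (hper : IsPeriodicConfig q p z) (i : ℤ) : |z i - z 0 - p / q * i| ≤ 1 := by
  have hquasi : ∀ i j, |(z (i + j) - z 0) - (z i - z 0) - (z j - z 0)| ≤ 1 := fun i j => by
    have := abs_sub_le_one_of_forall_int_le_or_le (f := fun i => z (i + j) - z i) (fun n => ?_) i 0
    · simpa [sub_sub, add_comm] using this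
    rcases hz.forall_le_or_forall_le_translateConfig h1 h3 h4 hq hper j (-n) with hle | hge
    · exact .inl fun i => by have := hle i; simp [translateConfig] at this; linarith
    · exact .inr fun i => by have := hge i; simp [translateConfig] at this; linarith
  have hmul := abs_sub_mul_le_of_abs_sub_sub_le (a := fun i => z i - z 0) (sub_self _) hquasi
    q.toNat i
  have hqR : (0 : ℝ) < q := by exact_mod_cast hq
  rw [Int.toNat_of_nonneg hq.le, show (q.toNat : ℝ) = q by exact_mod_cast Int.toNat_of_nonneg hq.le,
    mul_comm (q : ℤ), ← zero_add (i * q), hper.apply_add_mul] at hmul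
  rw [show z i - z 0 - p / q * i = -((z 0 + i * p - z 0 - q * (z i - z 0)) / q) by
    field_simp; ring, abs_neg, abs_div, abs_of_pos hqR, div_le_one hqR]
  simpa using hmul

theorem exists_minimalConfig_abs_sub_sub_mul_le_one (hcont : Continuous (Function.uncurry h))
    (h1 : CondH1 h) (h2 : CondH2 h) (h3 : CondH3 h) (h4 : CondH4 h) (ω : ℚ) :
    ∃ z, MinimalConfig h z ∧ ∀ i : ℤ, |z i - z 0 - ω * i| ≤ 1 := by
  obtain ⟨z, hz⟩ := exists_isPeriodicMinimizer hcont h1 h2 (q := ω.den) (by positivity) ω.num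
  have hmin := hz.minimalConfig hcont h1 h2 h3 (by positivity)
  refine ⟨z, hmin, fun i => ?_⟩
  simpa [Rat.cast_def] using hmin.abs_sub_sub_mul_le_one h1 h3 h4 (by positivity) hz.1 i

lemma le_of_tendsto_div_of_eventually_mul_add_le {u : ℕ → ℝ} {β ω c : ℝ}
    (hu : Tendsto (fun n : ℕ => u n / n) atTop (𝓝 β)) (hle : ∀ᶠ n : ℕ in atTop, ω * n + c ≤ u n) :
    ω ≤ β := by
  have hline : Tendsto (fun n : ℕ => ω + c / n) atTop (𝓝 ω) := by
    simpa using tendsto_const_nhds.add (tendsto_const_div_atTop_nhds_zero_nat c)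
  refine le_of_tendsto_of_tendsto hline hu ?_
  filter_upwards [hle, eventually_gt_atTop 0] with n hn hn0
  have hnR : (0 : ℝ) < n := by exact_mod_cast hn0
  rw [le_div_iff₀ hnR, add_mul, div_mul_cancel₀ _ hnR.ne']
  linarith

lemma le_of_tendsto_div_of_eventually_le_mul_add {u : ℕ → ℝ} {β ω c : ℝ}
    (hu : Tendsto (fun n : ℕ => u n / n) atTop (𝓝 β)) (hle : ∀ᶠ n : ℕ in atTop, u n ≤ ω * n + c) :
    β ≤ ω := by
  have := le_of_tendsto_div_of_eventually_mul_add_le (u := fun n => -u n) (β := -β) (ω := -ω)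
    (c := -c) (by simpa only [neg_div] using hu.neg) (hle.mono fun n hn => by linarith)
  linarith

section Displacement

variable (hcont : Continuous (Function.uncurry h)) (h1 : CondH1 h) (h2 : CondH2 h)
  (h3 : CondH3 h) (h4 : CondH4 h) {x : ℤ → ℝ} (hx : MinimalConfig h x) {β : ℝ}
  (hβ : Tendsto (fun n : ℕ => x n / n) atTop (𝓝 β))
include hcont h1 h2 h3 h4 hx hβ

/-- If `x` climbed too far above slope `β` by time `n`, a minimal configuration of a slightly
larger rational slope starting just above `x` would be crossed by `x` at time `n` and could
never be crossed back. -/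
lemma MinimalConfig.sub_sub_mul_le_two {n : ℕ} (hn : 0 < n) : x n - x 0 - n * β ≤ 2 := by
  by_contra! hfar
  have hnR : (0 : ℝ) < n := by exact_mod_cast hn
  obtain ⟨ω, hβω, hω⟩ := exists_rat_btwn (show β < (x n - x 0 - 2) / n by
    rw [lt_div_iff₀ hnR]; linarith)
  rw [lt_div_iff₀ hnR] at hω
  obtain ⟨z₀, hz₀, hz₀ω⟩ := exists_minimalConfig_abs_sub_sub_mul_le_one hcont h1 h2 h3 h4 ω
  set z := translateConfig z₀ 0 (⌊x 0 - z₀ 0⌋ + 1)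
  have hz : MinimalConfig h z := hz₀.translate h1 _ _
  have hzω : ∀ i : ℕ, |z i - z 0 - ω * i| ≤ 1 := fun i => by
    simpa [z, translateConfig] using hz₀ω i
  have hx0 : x 0 < z 0 := by
    simp only [z, translateConfig, add_zero]; push_cast
    linarith [Int.lt_floor_add_one (x 0 - z₀ 0)]
  have hz0 : z 0 ≤ x 0 + 1 := by
    simp only [z, translateConfig, add_zero]; push_cast
    linarith [Int.floor_le (x 0 - z₀ 0)]
  have hxn : z n < x n := by linarith [(abs_le.mp (hzω n)).2]
  refine hβω.not_ge (le_of_tendsto_div_of_eventually_mul_add_le (c := z 0 - 1) hβ ?_)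
  filter_upwards [eventually_gt_atTop n] with i hi
  have hcross := (hx 0 i (by omega)).le_of_crossing h3 h4 (hz 0 i (by omega)) (s := n)
    (by omega) (by omega) hx0 hxn
  linarith [(abs_le.mp (hzω i)).1]

lemma MinimalConfig.neg_two_le_sub_sub_mul {n : ℕ} (hn : 0 < n) : -2 ≤ x n - x 0 - n * β := by
  by_contra! hfar
  have hnR : (0 : ℝ) < n := by exact_mod_cast hn
  obtain ⟨ω, hω, hωβ⟩ := exists_rat_btwn (show (x n - x 0 + 2) / n < β by
    rw [div_lt_iff₀ hnR]; linarith)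
  rw [div_lt_iff₀ hnR] at hω
  obtain ⟨z₀, hz₀, hz₀ω⟩ := exists_minimalConfig_abs_sub_sub_mul_le_one hcont h1 h2 h3 h4 ω
  set z := translateConfig z₀ 0 (⌈x 0 - z₀ 0⌉ - 1)
  have hz : MinimalConfig h z := hz₀.translate h1 _ _
  have hzω : ∀ i : ℕ, |z i - z 0 - ω * i| ≤ 1 := fun i => by
    simpa [z, translateConfig] using hz₀ω i
  have hx0 : z 0 < x 0 := by
    simp only [z, translateConfig, add_zero]; push_cast
    linarith [Int.ceil_lt_add_one (x 0 - z₀ 0)]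
  have hz0 : x 0 - 1 ≤ z 0 := by
    simp only [z, translateConfig, add_zero]; push_cast
    linarith [Int.le_ceil (x 0 - z₀ 0)]
  have hxn : x n < z n := by linarith [(abs_le.mp (hzω n)).1]
  refine hωβ.not_ge (le_of_tendsto_div_of_eventually_le_mul_add (c := z 0 + 1) hβ ?_)
  filter_upwards [eventually_gt_atTop n] with i hi
  have hcross := (hz 0 i (by omega)).le_of_crossing h3 h4 (hx 0 i (by omega)) (s := n)
    (by omega) (by omega) hx0 hxn
  linarith [(abs_le.mp (hzω i)).2]

theorem MinimalConfig.abs_sub_sub_mul_le_two {n : ℕ} (hn : 0 < n) :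
    |x n - x 0 - n * β| ≤ 2 :=
  abs_le.mpr ⟨hx.neg_two_le_sub_sub_mul hcont h1 h2 h3 h4 hβ hn,
    hx.sub_sub_mul_le_two hcont h1 h2 h3 h4 hβ hn⟩

end Displacement

lemma tendsto_of_forall_eventually_mul_abs_sub_le {α : ℕ → ℝ} {β C : ℝ}
    (hα : ∀ N : ℕ, 0 < N → ∀ᶠ k in atTop, N * |α k - β| ≤ C) : Tendsto α atTop (𝓝 β) := by
  rw [Metric.tendsto_nhds]
  intro ε hε
  obtain ⟨N, hN⟩ := exists_nat_gt (C / ε)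
  filter_upwards [hα (N + 1) N.succ_pos] with k hk
  rw [Real.dist_eq]
  rw [div_lt_iff₀ hε] at hN
  push_cast at hk
  nlinarith [abs_nonneg (α k - β)]

end

/-- The rotation number is continuous on minimal configurations (product topology). -/
theorem rotation_number_continuous
    (h : ℝ → ℝ → ℝ) (hcont : Continuous (Function.uncurry h))
    (h1 : CondH1 h) (h2 : CondH2 h) (h3 : CondH3 h) (h4 : CondH4 h)
    (xs : ℕ → ℤ → ℝ) (hxs : ∀ k : ℕ, MinimalConfig h (xs k))
    (x : ℤ → ℝ) (hx : MinimalConfig h x)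
    (hlim : ∀ i : ℤ, Tendsto (fun k : ℕ => xs k i) atTop (𝓝 (x i)))
    (α : ℕ → ℝ) (hα : ∀ k : ℕ, Tendsto (fun n : ℕ => xs k n / n) atTop (𝓝 (α k)))
    (β : ℝ) (hβ : Tendsto (fun n : ℕ => x n / n) atTop (𝓝 β)) :
    Tendsto α atTop (𝓝 β) := by
  refine tendsto_of_forall_eventually_mul_abs_sub_le (C := 6) fun N hN => ?_
  have hclose : ∀ i : ℤ, ∀ᶠ k in atTop, |xs k i - x i| ≤ 1 := fun i =>
    (hlim i).eventually (Metric.closedBall_mem_nhds _ one_pos)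
  filter_upwards [hclose N, hclose 0] with k hkN hk0
  have hxk := (hxs k).abs_sub_sub_mul_le_two hcont h1 h2 h3 h4 (hα k) hN
  have hx := hx.abs_sub_sub_mul_le_two hcont h1 h2 h3 h4 hβ hN
  rw [← abs_of_nonneg (N.cast_nonneg (α := ℝ)), ← abs_mul, abs_le]
  rw [abs_le] at hkN hk0 hxk hx
  constructor <;> linarith
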